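/- arXiv:2510.27120 — 2 statements merged into one kernel-verified Lean document; each statement's English description precedes it below -/
import Mathlib

section
/- Let f : ℝⁿ → ℝ be continuously differentiable, T > 0, x₀ ∈ ℝⁿ, and let Π : [0,T] → ℝ^{n×n} be a continuous map such that Π(t) is a symmetric idempotent matrix (an orthogonal projection) for each t. Let x : [0,T] → ℝⁿ be continuously differentiable and u : [0,T] → ℝⁿ continuous with ẋ(t) = Π(t)u(t) and x(0) = x₀. Then ∫₀ᵀ ( (1/2)⟨Π(t)∇f(x(t)), ∇f(x(t))⟩ + (1/2)⟨Π(t)u(t), u(t)⟩ ) dt + f(x(T)) = f(x₀) + (1/2)∫₀ᵀ ‖Π(t)(u(t) + ∇f(x(t)))‖² dt ≥ f(x₀), with equality whenever Π(t)u(t) = −Π(t)∇f(x(t)) for all t; in particular, the continuous-time stochastic-gradient-descent path ẋ*(t) = −Π(t)∇f(x*(t)), x*(0) = x₀ (with u* = −∇f(x*)), is optimal for this weighted control problem. -/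
/-! Writing `g t = ∇f (x t)`, the chain rule gives `d/dt f (x t) = ⟪g t, Π t (u t)⟫`, and for an
orthogonal projection `Π` one can complete the square:
`½⟪Π g, g⟫ + ½⟪Π u, u⟫ + ⟪g, Π u⟫ = ½‖Π (u + g)‖²`.
Integrating over `[0, T]` and applying the fundamental theorem of calculus yields the identity;
the remaining integral is nonnegative and vanishes when `Π u = -Π g`. -/

open MeasureTheory Real intervalIntegral RealInnerProductSpace

variable {E : Type*} [NormedAddCommGroup E] [InnerProductSpace ℝ E]

namespace LinearMap.IsSymmetricProjection

variable {p : E →ₗ[ℝ] E}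

theorem inner_apply_self (hp : p.IsSymmetricProjection) (v : E) : ⟪p v, v⟫ = ‖p v‖ ^ 2 := by
  rw [← real_inner_self_eq_norm_sq, hp.isSymmetric v (p v), ← Module.End.mul_apply,
    hp.isIdempotentElem.eq, real_inner_comm]

theorem norm_apply_add_sq (hp : p.IsSymmetricProjection) (a b : E) :
    ‖p (a + b)‖ ^ 2 = ⟪p a, a⟫ + ⟪p b, b⟫ + 2 * ⟪p a, b⟫ := by
  have hcross : ⟪p b, a⟫ = ⟪p a, b⟫ := by rw [hp.isSymmetric, real_inner_comm]
  rw [← hp.inner_apply_self, map_add, inner_add_left, inner_add_right, inner_add_right, hcross]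
  ring

end LinearMap.IsSymmetricProjection

theorem ContinuousLinearMap.isSymmetricProjection_coe {Q : E →L[ℝ] E}
    (hsymm : ∀ v w, ⟪Q v, w⟫ = ⟪v, Q w⟫) (hidem : Q.comp Q = Q) :
    (Q : E →ₗ[ℝ] E).IsSymmetricProjection :=
  ⟨congrArg ContinuousLinearMap.toLinearMap hidem, hsymm⟩

variable [CompleteSpace E]

theorem ContDiff.continuous_gradient {f : E → ℝ} (hf : ContDiff ℝ 1 f) :
    Continuous (gradient f) := by
  have hrepr : gradient f = (InnerProductSpace.toDual ℝ E).symm ∘ fderiv ℝ f := by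
    rw [← toDual_comp_gradient, ← Function.comp_assoc, LinearIsometryEquiv.symm_comp_self,
      Function.id_comp]
  rw [hrepr]
  exact (InnerProductSpace.toDual ℝ E).symm.continuous.comp (hf.continuous_fderiv one_ne_zero)

theorem HasGradientAt.comp_hasDerivAt {f : E → ℝ} {f' : E} {x : ℝ → E} {v : E} {t : ℝ}
    (hf : HasGradientAt f f' (x t)) (hx : HasDerivAt x v t) :
    HasDerivAt (f ∘ x) ⟪f', v⟫ t := by
  simpa using hf.hasFDerivAt.comp_hasDerivAt t hx

theorem integral_inner_gradient_eq_sub {f : E → ℝ} (hf : ContDiff ℝ 1 f) {x v : ℝ → E}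
    {a b : ℝ} (hab : a ≤ b) (hx : ∀ t ∈ Set.Icc a b, HasDerivAt x (v t) t)
    (hv : ContinuousOn v (Set.Icc a b)) :
    ∫ t in a..b, ⟪gradient f (x t), v t⟫ = f (x b) - f (x a) := by
  rw [← Set.uIcc_of_le hab] at hx hv
  have hxcont : ContinuousOn x (Set.uIcc a b) := fun t ht =>
    (hx t ht).continuousAt.continuousWithinAt
  refine integral_eq_sub_of_hasDerivAt (f := f ∘ x) (fun t ht => ?_) ?_
  · exact ((hf.differentiable one_ne_zero (x t)).hasGradientAt).comp_hasDerivAt (hx t ht)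
  · exact ((hf.continuous_gradient.comp_continuousOn hxcont).inner hv).intervalIntegrable

theorem integral_cost_add_terminal_eq {f : E → ℝ} (hf : ContDiff ℝ 1 f) {P : ℝ → E →L[ℝ] E}
    {x u : ℝ → E} {a b : ℝ} (hab : a ≤ b) (hPcont : ContinuousOn P (Set.Icc a b))
    (hP : ∀ t ∈ Set.Icc a b, (P t : E →ₗ[ℝ] E).IsSymmetricProjection)
    (hu : ContinuousOn u (Set.Icc a b)) (hx : ∀ t ∈ Set.Icc a b, HasDerivAt x (P t (u t)) t) :
    (∫ t in a..b, ((1 / 2) * ⟪P t (gradient f (x t)), gradient f (x t)⟫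
        + (1 / 2) * ⟪P t (u t), u t⟫)) + f (x b)
      = f (x a) + (1 / 2) * ∫ t in a..b, ‖P t (u t + gradient f (x t))‖ ^ 2 := by
  set g : ℝ → E := fun t => gradient f (x t)
  have hIcc : Set.uIcc a b = Set.Icc a b := Set.uIcc_of_le hab
  have hgcont : ContinuousOn g (Set.Icc a b) :=
    hf.continuous_gradient.comp_continuousOn fun t ht => (hx t ht).continuousAt.continuousWithinAt
  have hsquare : ∀ t ∈ Set.uIcc a b,
      (1 / 2) * ⟪P t (g t), g t⟫ + (1 / 2) * ⟪P t (u t), u t⟫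
        = (1 / 2) * ‖P t (u t + g t)‖ ^ 2 - ⟪g t, P t (u t)⟫ := by
    intro t ht
    have h := (hP t (hIcc ▸ ht)).norm_apply_add_sq (u t) (g t)
    simp only [ContinuousLinearMap.coe_coe] at h
    rw [h, real_inner_comm (P t (u t)) (g t)]
    ring
  have hnorm_int : IntervalIntegrable (fun t => ‖P t (u t + g t)‖ ^ 2) volume a b :=
    ((hPcont.clm_apply (hu.add hgcont)).norm.pow 2).mono hIcc.le |>.intervalIntegrable
  have hinner_int : IntervalIntegrable (fun t => ⟪g t, P t (u t)⟫) volume a b :=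
    (hgcont.inner (hPcont.clm_apply hu)).mono hIcc.le |>.intervalIntegrable
  rw [integral_congr hsquare, integral_sub (hnorm_int.const_mul _) hinner_int,
    intervalIntegral.integral_const_mul,
    integral_inner_gradient_eq_sub hf hab hx (hPcont.clm_apply hu)]
  ring

/-- Let `f : ℝⁿ → ℝ` be `C¹`, `T > 0`, `x₀ ∈ ℝⁿ`, and let
`Π : [0,T] → ℝ^{n×n}` be continuous with each `Π t` a symmetric idempotent (an orthogonal
projection).  For every `C¹` path `x` with `ẋ t = Π t (u t)`, `x 0 = x₀` and `u` continuous: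
`∫₀ᵀ ((1/2)⟪Π t ∇f(x t), ∇f(x t)⟫ + (1/2)⟪Π t (u t), u t⟫) dt + f (x T)
  = f x₀ + (1/2)∫₀ᵀ ‖Π t (u t + ∇f (x t))‖² dt ≥ f x₀`,
with equality whenever `Π t (u t) = -Π t (∇f (x t))` for all `t`; in particular the
continuous-time stochastic-gradient-descent path `ẋ⋆ = -Π t ∇f(x⋆)` (i.e. `u⋆ = -∇f(x⋆)`)
is optimal for this weighted control problem. -/
theorem sgd_flow_optimal {n : ℕ}
    (f : EuclideanSpace ℝ (Fin n) → ℝ) (hf : ContDiff ℝ 1 f)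
    (T : ℝ) (hT : 0 < T) (x₀ : EuclideanSpace ℝ (Fin n))
    (P : ℝ → (EuclideanSpace ℝ (Fin n) →L[ℝ] EuclideanSpace ℝ (Fin n)))
    (hPcont : ContinuousOn P (Set.Icc (0 : ℝ) T))
    (hPsymm : ∀ t v w, ⟪P t v, w⟫ = ⟪v, P t w⟫)
    (hPidem : ∀ t, (P t).comp (P t) = P t)
    (x : ℝ → EuclideanSpace ℝ (Fin n)) (u : ℝ → EuclideanSpace ℝ (Fin n))
    (hu : ContinuousOn u (Set.Icc (0 : ℝ) T))
    (hx : ∀ t ∈ Set.Icc (0 : ℝ) T, HasDerivAt x (P t (u t)) t)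
    (hx0 : x 0 = x₀) :
    (∫ t in (0 : ℝ)..T,
        ((1 / 2) * ⟪P t (gradient f (x t)), gradient f (x t)⟫
          + (1 / 2) * ⟪P t (u t), u t⟫)) + f (x T)
        = f x₀ + (1 / 2) * ∫ t in (0 : ℝ)..T, ‖P t (u t + gradient f (x t))‖ ^ 2
      ∧ (∫ t in (0 : ℝ)..T,
          ((1 / 2) * ⟪P t (gradient f (x t)), gradient f (x t)⟫
            + (1 / 2) * ⟪P t (u t), u t⟫)) + f (x T) ≥ f x₀
      ∧ ((∀ t ∈ Set.Icc (0 : ℝ) T, P t (u t) = -(P t (gradient f (x t)))) →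
          (∫ t in (0 : ℝ)..T,
            ((1 / 2) * ⟪P t (gradient f (x t)), gradient f (x t)⟫
              + (1 / 2) * ⟪P t (u t), u t⟫)) + f (x T) = f x₀) := by
  have hcost := integral_cost_add_terminal_eq hf hT.le hPcont
    (fun t _ => ContinuousLinearMap.isSymmetricProjection_coe (hPsymm t) (hPidem t)) hu hx
  rw [hx0] at hcost
  have hnonneg : 0 ≤ ∫ t in (0 : ℝ)..T, ‖P t (u t + gradient f (x t))‖ ^ 2 :=
    integral_nonneg hT.le fun t _ => sq_nonneg _
  refine ⟨hcost, by linarith, fun hopt => ?_⟩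
  have hzero : ∫ t in (0 : ℝ)..T, ‖P t (u t + gradient f (x t))‖ ^ 2 = 0 := by
    refine (integral_congr (g := fun _ => (0 : ℝ)) fun t ht => ?_).trans integral_zero
    rw [Set.uIcc_of_le hT.le] at ht
    simp [map_add, hopt t ht]
  rw [hcost, hzero, mul_zero, add_zero]
end

section
/- Let ρ̃, ρ : [t₀,t₁] × ℝⁿ → (0,∞) be smooth strictly positive with ∫ ρ̃(t,x) dx = ∫ ρ(t,x) dx = 1 for each t, and let ṽ, v be smooth time-dependent vector fields satisfying the continuity equations ∂ρ̃/∂t + ∇·(ṽρ̃) = 0 and ∂ρ/∂t + ∇·(vρ) = 0. Assume t ↦ D(ρ̃_t‖ρ_t) is differentiable with derivative obtained by differentiating under the integral sign, and that ∫ ∇·( (1 + log(ρ̃_t/ρ_t)) ṽ_t ρ̃_t ) dx = 0 and ∫ ∇·( (ρ̃_t/ρ_t) v_t ρ_t ) dx = 0 for each t. Then (d/dt) D(ρ̃_t‖ρ_t) = ∫_{ℝⁿ} [ ∇log(ρ̃_t/ρ_t) · ṽ(t,x) ρ̃_t(x) − ∇(ρ̃_t/ρ_t) · v(t,x) ρ_t(x)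 ] dx. -/
open MeasureTheory Real RealInnerProductSpace

/-- Divergence of a vector field on `ℝⁿ`: `(∇·w)(x) = ∑ᵢ ∂wⁱ/∂xⁱ (x)`. -/
noncomputable def vdiv {n : ℕ} (w : EuclideanSpace ℝ (Fin n) → EuclideanSpace ℝ (Fin n))
    (x : EuclideanSpace ℝ (Fin n)) : ℝ :=
  ∑ i, fderiv ℝ w x (EuclideanSpace.single i 1) i

lemma fderiv_apply_sum {n : ℕ} (L : EuclideanSpace ℝ (Fin n) →L[ℝ] ℝ)
    (u : EuclideanSpace ℝ (Fin n)) :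
    L u = ∑ i, u i * L (EuclideanSpace.single i 1) := by
  have h : u = ∑ i, u i • EuclideanSpace.single i (1:ℝ) := by
    simpa using ((EuclideanSpace.basisFun (Fin n) ℝ).sum_repr u).symm
  conv_lhs => rw [h]
  simp [smul_eq_mul]

lemma vdiv_smul {n : ℕ} (f : EuclideanSpace ℝ (Fin n) → ℝ)
    (w : EuclideanSpace ℝ (Fin n) → EuclideanSpace ℝ (Fin n)) (x : EuclideanSpace ℝ (Fin n))
    (hf : DifferentiableAt ℝ f x) (hw : DifferentiableAt ℝ w x) :
    vdiv (fun y => f y • w y) x = fderiv ℝ f x (w x) + f x * vdiv w x := by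
  have h := (hf.hasFDerivAt.smul hw.hasFDerivAt).fderiv
  unfold vdiv
  rw [show (fun y => f y • w y) = f • w from rfl, h]
  simp only [ContinuousLinearMap.add_apply, ContinuousLinearMap.smul_apply,
    ContinuousLinearMap.smulRight_apply, PiLp.add_apply, PiLp.smul_apply, smul_eq_mul]
  rw [Finset.sum_add_distrib, Finset.mul_sum, fderiv_apply_sum (fderiv ℝ f x) (w x)]
  rw [add_comm]
  congr 1
  exact Finset.sum_congr rfl fun i _ => mul_comm _ _

lemma integral_add_right' {α : Type*} [MeasurableSpace α] {μ : Measure α}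
    (G B : α → ℝ) (hB : Integrable B μ) (hB0 : ∫ x, B x ∂μ = 0) :
    ∫ x, (G x + B x) ∂μ = ∫ x, G x ∂μ := by
  by_cases hG : Integrable G μ
  · rw [integral_add hG hB, hB0, add_zero]
  · have hGB : ¬ Integrable (fun x => G x + B x) μ := by
      intro h
      have h2 : Integrable (fun x => (G x + B x) - B x) μ := h.sub hB
      exact hG (by simpa using h2)
    rw [integral_undef hG, integral_undef hGB]

/-- Let `(ρt_s, vt)` and `(ρ_s, v)` be two smooth strictly positive
flows of probability densities on `[t₀,t₁]`, each satisfying its continuity equation.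
Under differentiation under the integral sign and vanishing of the boundary terms, the
relative entropy `D(ρt_s‖ρ_s)` satisfies
`(d/ds) D(ρt_s‖ρ_s) = ∫ [∇log(ρt_s/ρ_s)·vt ρt_s − ∇(ρt_s/ρ_s)·v ρ_s] dx`,
identifying `(∇log(ρt/ρ), −∇(ρt/ρ))` as the gradient of `D` on `W₂ × W₂`. -/
theorem relEntropy_derivative_product_space {n : ℕ} (t₀ t₁ : ℝ) (ht : t₀ < t₁)
    (ρt ρ : ℝ → EuclideanSpace ℝ (Fin n) → ℝ)
    (hρts : ContDiff ℝ (⊤ : ℕ∞) (fun p : ℝ × EuclideanSpace ℝ (Fin n) => ρt p.1 p.2))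
    (hρs : ContDiff ℝ (⊤ : ℕ∞) (fun p : ℝ × EuclideanSpace ℝ (Fin n) => ρ p.1 p.2))
    (hρtpos : ∀ t x, 0 < ρt t x) (hρpos : ∀ t x, 0 < ρ t x)
    (hρt1 : ∀ t, ∫ x, ρt t x = 1) (hρ1 : ∀ t, ∫ x, ρ t x = 1)
    (vt v : ℝ → EuclideanSpace ℝ (Fin n) → EuclideanSpace ℝ (Fin n))
    (hvts : ContDiff ℝ (⊤ : ℕ∞) (fun p : ℝ × EuclideanSpace ℝ (Fin n) => vt p.1 p.2))
    (hvs : ContDiff ℝ (⊤ : ℕ∞) (fun p : ℝ × EuclideanSpace ℝ (Fin n) => v p.1 p.2))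
    (hcet : ∀ t ∈ Set.Icc t₀ t₁, ∀ x,
      deriv (fun s => ρt s x) t + vdiv (fun y => ρt t y • vt t y) x = 0)
    (hce : ∀ t ∈ Set.Icc t₀ t₁, ∀ x,
      deriv (fun s => ρ s x) t + vdiv (fun y => ρ t y • v t y) x = 0)
    (hDUI : ∀ t ∈ Set.Icc t₀ t₁,
      HasDerivAt (fun s => ∫ x, ρt s x * Real.log (ρt s x / ρ s x))
        (∫ x, (deriv (fun s => ρt s x) t * (1 + Real.log (ρt t x / ρ t x))
          - deriv (fun s => ρ s x) t * (ρt t x / ρ t x))) t)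
    (hbdry₁ : ∀ t ∈ Set.Icc t₀ t₁,
      (Integrable (fun x =>
          vdiv (fun y => (1 + Real.log (ρt t y / ρ t y)) • (ρt t y • vt t y)) x))
        ∧ ∫ x, vdiv (fun y => (1 + Real.log (ρt t y / ρ t y)) • (ρt t y • vt t y)) x = 0)
    (hbdry₂ : ∀ t ∈ Set.Icc t₀ t₁,
      (Integrable (fun x => vdiv (fun y => (ρt t y / ρ t y) • (ρ t y • v t y)) x))
        ∧ ∫ x, vdiv (fun y => (ρt t y / ρ t y) • (ρ t y • v t y)) x = 0) :
    ∀ t ∈ Set.Icc t₀ t₁,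
      HasDerivAt (fun s => ∫ x, ρt s x * Real.log (ρt s x / ρ s x))
        (∫ x, (⟪gradient (fun y => Real.log (ρt t y / ρ t y)) x, vt t x⟫ * ρt t x
          - ⟪gradient (fun y => ρt t y / ρ t y) x, v t x⟫ * ρ t x)) t := by
  intro t ht'
  -- differentiability of the time-slices
  have hρtC : ContDiff ℝ (⊤ : ℕ∞) (fun y => ρt t y) :=
    hρts.comp (contDiff_const.prodMk contDiff_id)
  have hρC : ContDiff ℝ (⊤ : ℕ∞) (fun y => ρ t y) :=
    hρs.comp (contDiff_const.prodMk contDiff_id)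
  have hvtC : ContDiff ℝ (⊤ : ℕ∞) (fun y => vt t y) :=
    hvts.comp (contDiff_const.prodMk contDiff_id)
  have hvC : ContDiff ℝ (⊤ : ℕ∞) (fun y => v t y) :=
    hvs.comp (contDiff_const.prodMk contDiff_id)
  set Q : EuclideanSpace ℝ (Fin n) → ℝ := fun y => ρt t y / ρ t y with hQ
  set L : EuclideanSpace ℝ (Fin n) → ℝ := fun y => Real.log (ρt t y / ρ t y) with hL
  have hQC : ContDiff ℝ (⊤ : ℕ∞) Q := hρtC.div hρC (fun y => (hρpos t y).ne')
  have hQd : ∀ y, DifferentiableAt ℝ Q y := fun y => hQC.differentiable (by simp) y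
  have hQpos : ∀ y, 0 < Q y := fun y => div_pos (hρtpos t y) (hρpos t y)
  have hLd : ∀ y, DifferentiableAt ℝ L y := fun y =>
    (Real.differentiableAt_log (hQpos y).ne').comp y (hQd y)
  have hw₁d : ∀ y, DifferentiableAt ℝ (fun z => ρt t z • vt t z) y := fun y =>
    (hρtC.differentiable (by simp) y).smul (hvtC.differentiable (by simp) y)
  have hw₂d : ∀ y, DifferentiableAt ℝ (fun z => ρ t z • v t z) y := fun y =>
    (hρC.differentiable (by simp) y).smul (hvC.differentiable (by simp) y)
  -- pointwise identity
  have hpt : ∀ x,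
      deriv (fun s => ρt s x) t * (1 + Real.log (ρt t x / ρ t x))
        - deriv (fun s => ρ s x) t * (ρt t x / ρ t x)
      = (⟪gradient L x, vt t x⟫ * ρt t x - ⟪gradient Q x, v t x⟫ * ρ t x)
        + (-(vdiv (fun y => (1 + L y) • (ρt t y • vt t y)) x)
           + vdiv (fun y => Q y • (ρ t y • v t y)) x) := by
    intro x
    have h1 : deriv (fun s => ρt s x) t = -vdiv (fun y => ρt t y • vt t y) x := by
      have := hcet t ht' x; linarith
    have h2 : deriv (fun s => ρ s x) t = -vdiv (fun y => ρ t y • v t y) x := by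
      have := hce t ht' x; linarith
    have d1 : vdiv (fun y => (1 + L y) • (ρt t y • vt t y)) x
        = ρt t x * fderiv ℝ L x (vt t x)
          + (1 + L x) * vdiv (fun y => ρt t y • vt t y) x := by
      rw [vdiv_smul (fun y => 1 + L y) _ x ((differentiableAt_const 1).add (hLd x)) (hw₁d x)]
      congr 1
      rw [fderiv_const_add]
      show fderiv ℝ L x (ρt t x • vt t x) = _
      rw [(fderiv ℝ L x).map_smul, smul_eq_mul]
    have d2 : vdiv (fun y => Q y • (ρ t y • v t y)) x
        = ρ t x * fderiv ℝ Q x (v t x) + Q x * vdiv (fun y => ρ t y • v t y) x := by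
      rw [vdiv_smul _ _ x (hQd x) (hw₂d x)]
      congr 1
      show fderiv ℝ Q x (ρ t x • v t x) = _
      rw [(fderiv ℝ Q x).map_smul, smul_eq_mul]
    have g1 : ⟪gradient L x, vt t x⟫ = fderiv ℝ L x (vt t x) :=
      InnerProductSpace.toDual_symm_apply
    have g2 : ⟪gradient Q x, v t x⟫ = fderiv ℝ Q x (v t x) :=
      InnerProductSpace.toDual_symm_apply
    rw [h1, h2, d1, d2, g1, g2]
    show _ * (1 + L x) - _ * Q x = _
    ring
  -- equality of integrals
  have hBneg : Integrable (fun x =>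
      -(vdiv (fun y => (1 + L y) • (ρt t y • vt t y)) x)) := (hbdry₁ t ht').1.neg
  have hB : Integrable (fun x =>
      -(vdiv (fun y => (1 + L y) • (ρt t y • vt t y)) x)
        + vdiv (fun y => Q y • (ρ t y • v t y)) x) := hBneg.add (hbdry₂ t ht').1
  have hB0 : (∫ x, (-(vdiv (fun y => (1 + L y) • (ρt t y • vt t y)) x)
        + vdiv (fun y => Q y • (ρ t y • v t y)) x)) = 0 := by
    rw [integral_add hBneg (hbdry₂ t ht').1, integral_neg, (hbdry₁ t ht').2,
      (hbdry₂ t ht').2]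
    ring
  have key : (∫ x, (deriv (fun s => ρt s x) t * (1 + Real.log (ρt t x / ρ t x))
          - deriv (fun s => ρ s x) t * (ρt t x / ρ t x)))
      = ∫ x, (⟪gradient L x, vt t x⟫ * ρt t x - ⟪gradient Q x, v t x⟫ * ρ t x) := by
    rw [show (fun x => (deriv (fun s => ρt s x) t * (1 + Real.log (ρt t x / ρ t x))
          - deriv (fun s => ρ s x) t * (ρt t x / ρ t x)))
        = fun x => ((⟪gradient L x, vt t x⟫ * ρt t x - ⟪gradient Q x, v t x⟫ * ρ t x)
            + (-(vdiv (fun y => (1 + L y) • (ρt t y • vt t y)) x)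
               + vdiv (fun y => Q y • (ρ t y • v t y)) x)) from funext hpt]
    exact integral_add_right' _ _ hB hB0
  exact key ▸ hDUI t ht'
end
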